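/- Let A ⊂ ℝᵖ be a compact self-similar fractal fixed under M ≥ 2 similitudes with equal contraction ratio r, satisfying the open set condition, with d = log M / log(1/r) and s > d. Let 𝔐 = {M^k n : k ≥ 1} for a fixed n ≥ 2. Then the limit lim_{𝔐 ∋ N → ∞} ℰ_s(A, N)/N^{1+s/d} exists (and is finite). -/

import Mathlib

open Filter MeasureTheory Metric Real
open scoped BigOperators ENNReal NNReal Topology

open Classical in
noncomputable def rieszEnergy {E : Type*} [PseudoMetricSpace E] (s : ℝ) (ω : Finset E) : ℝ :=
  ∑ x ∈ ω, ∑ y ∈ ω, if x ≠ y then dist x y ^ (-s) else 0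

noncomputable def minRieszEnergy {E : Type*} [PseudoMetricSpace E] (s : ℝ) (A : Set E) (N : ℕ) : ℝ :=
  sInf {e : ℝ | ∃ ω : Finset E, ↑ω ⊆ A ∧ ω.card = N ∧ e = rieszEnergy s ω}

/-!
Placing `M` similar copies of an `N`-point configuration into the pieces `ψ m '' A` gives
`ℰ(MN) ≤ M r^{-s} ℰ(N) + σ^{-s} (MN)^2`: the energy inside each copy scales by
`r^{-s} = M^{s/d}`, and distinct copies are `σ`-separated. Normalised by `N^{1+s/d}`, the energies
along `N = M^k n` can therefore increase only by `C ρ^k` from one step to the next, with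
`ρ = M^{1-s/d} < 1` because `s > d`; a nonnegative sequence with such summable increments
converges.
-/

open Finset

section Energy

variable {E : Type*} [PseudoMetricSpace E] {s σ : ℝ}

-- Uses the same classical decidability instance as `rieszEnergy`, so that the two unfold to the
-- same term (`rieszEnergy_eq_sum_rieszKernel` is `rfl`).
open Classical in
noncomputable def rieszKernel (s : ℝ) (x y : E) : ℝ :=
  if x ≠ y then dist x y ^ (-s) else 0

lemma rieszEnergy_eq_sum_rieszKernel (ω : Finset E) :
    rieszEnergy s ω = ∑ x ∈ ω, ∑ y ∈ ω, rieszKernel s x y :=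
  rfl

lemma rieszKernel_nonneg (x y : E) : 0 ≤ rieszKernel s x y := by
  unfold rieszKernel
  split_ifs
  exacts [rpow_nonneg dist_nonneg _, le_rfl]

lemma rieszKernel_le_of_le_dist (hσ : 0 < σ) (hs : 0 ≤ s) {x y : E} (h : σ ≤ dist x y) :
    rieszKernel s x y ≤ σ ^ (-s) := by
  unfold rieszKernel
  split_ifs
  exacts [rpow_le_rpow_of_nonpos hσ h (neg_nonpos.2 hs), rpow_nonneg hσ.le _]

lemma rieszEnergy_nonneg (ω : Finset E) : 0 ≤ rieszEnergy s ω :=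
  sum_nonneg fun x _ => sum_nonneg fun y _ => rieszKernel_nonneg x y

lemma minRieszEnergy_nonneg (A : Set E) (N : ℕ) : 0 ≤ minRieszEnergy s A N :=
  Real.sInf_nonneg <| by
    rintro _ ⟨ω, -, -, rfl⟩
    exact rieszEnergy_nonneg ω

lemma minRieszEnergy_le {A : Set E} {ω : Finset E} (hωA : ↑ω ⊆ A) :
    minRieszEnergy s A ω.card ≤ rieszEnergy s ω :=
  csInf_le ⟨0, by rintro _ ⟨ω, -, -, rfl⟩; exact rieszEnergy_nonneg ω⟩ ⟨ω, hωA, rfl, rfl⟩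

lemma minRieszEnergy_le_mul_add {A : Set E} {N N' : ℕ} {c K : ℝ} (hN : N ≤ N') (hc : 0 < c)
    (hK : 0 ≤ K) (h : ∀ ω : Finset E, ↑ω ⊆ A → ω.card = N →
      ∃ Ω : Finset E, ↑Ω ⊆ A ∧ Ω.card = N' ∧ rieszEnergy s Ω ≤ c * rieszEnergy s ω + K) :
    minRieszEnergy s A N' ≤ c * minRieszEnergy s A N + K := by
  rcases Set.eq_empty_or_nonempty
    {e : ℝ | ∃ ω : Finset E, ↑ω ⊆ A ∧ ω.card = N ∧ e = rieszEnergy s ω} with hS | hS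
  · -- `sInf ∅ = 0`: with no `N`-point subsets there are no `N'`-point ones, so both minima vanish.
    have hS' : {e : ℝ | ∃ Ω : Finset E, ↑Ω ⊆ A ∧ Ω.card = N' ∧ e = rieszEnergy s Ω} = ∅ := by
      refine Set.eq_empty_iff_forall_notMem.2 ?_
      rintro _ ⟨Ω, hΩA, rfl, rfl⟩
      obtain ⟨ω, hωΩ, hω⟩ := exists_subset_card_eq hN
      exact hS.subset ⟨ω, (coe_subset.2 hωΩ).trans hΩA, hω, rfl⟩
    rw [minRieszEnergy, minRieszEnergy, hS, hS', Real.sInf_empty]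
    simpa using hK
  · rw [← sub_le_iff_le_add, ← div_le_iff₀' hc]
    refine le_csInf hS ?_
    rintro _ ⟨ω, hωA, hω, rfl⟩
    obtain ⟨Ω, hΩA, hΩ, hE⟩ := h ω hωA hω
    rw [div_le_iff₀' hc]
    linarith [hΩ ▸ minRieszEnergy_le (s := s) hΩA]

lemma disjoint_of_le_dist (hσ : 0 < σ) {ω ω' : Finset E}
    (h : ∀ x ∈ ω, ∀ y ∈ ω', σ ≤ dist x y) : Disjoint ω ω' :=
  disjoint_left.2 fun x hx hx' => by linarith [h x hx x hx', dist_self x]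

lemma rieszEnergy_biUnion_le [DecidableEq E] {ι : Type*} [Fintype ι] (hσ : 0 < σ) (hs : 0 ≤ s)
    (ω : ι → Finset E) (hsep : ∀ i j, i ≠ j → ∀ x ∈ ω i, ∀ y ∈ ω j, σ ≤ dist x y) :
    rieszEnergy s (univ.biUnion ω) ≤
      ∑ i, rieszEnergy s (ω i) + σ ^ (-s) * #(univ.biUnion ω) ^ 2 := by
  set Ω := univ.biUnion ω
  have hdisj : (↑(univ : Finset ι) : Set ι).PairwiseDisjoint ω :=
    fun i _ j _ hij => disjoint_of_le_dist hσ (hsep i j hij)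
  have hrow : ∀ i, ∀ x ∈ ω i,
      ∑ y ∈ Ω, rieszKernel s x y ≤ ∑ y ∈ ω i, rieszKernel s x y + #Ω * σ ^ (-s) := by
    intro i x hx
    rw [← sum_sdiff (subset_biUnion_of_mem ω (mem_univ i)), add_comm]
    gcongr
    calc ∑ y ∈ Ω \ ω i, rieszKernel s x y ≤ #(Ω \ ω i) • σ ^ (-s) := by
          refine sum_le_card_nsmul _ _ _ fun y hy => ?_
          obtain ⟨hyΩ, hyi⟩ := mem_sdiff.1 hy
          obtain ⟨j, -, hyj⟩ := mem_biUnion.1 hyΩ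
          exact rieszKernel_le_of_le_dist hσ hs
            (hsep i j (by rintro rfl; exact hyi hyj) x hx y hyj)
      _ ≤ #Ω * σ ^ (-s) := by
          rw [nsmul_eq_mul]
          gcongr
          exact sdiff_subset
  calc rieszEnergy s Ω
      = ∑ i, ∑ x ∈ ω i, ∑ y ∈ Ω, rieszKernel s x y := by
        rw [rieszEnergy_eq_sum_rieszKernel, sum_biUnion hdisj]
    _ ≤ ∑ i, ∑ x ∈ ω i, (∑ y ∈ ω i, rieszKernel s x y + #Ω * σ ^ (-s)) :=
        sum_le_sum fun i _ => sum_le_sum (hrow i)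
    _ = ∑ i, rieszEnergy s (ω i) + σ ^ (-s) * #Ω ^ 2 := by
        simp only [sum_add_distrib, rieszEnergy_eq_sum_rieszKernel]
        rw [← sum_biUnion hdisj (f := fun _ => (#Ω : ℝ) * σ ^ (-s))]
        simp only [sum_const, nsmul_eq_mul]
        ring

end Energy

section Configurations

variable {E F : Type*} [MetricSpace E] [MetricSpace F] {s r σ : ℝ}

lemma injective_of_dist_eq_mul (hr : 0 < r) {f : E → F}
    (hf : ∀ x y, dist (f x) (f y) = r * dist x y) : Function.Injective f := fun x y h => by
  simpa [hf, hr.ne'] using dist_eq_zero.2 h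

lemma rieszKernel_map_of_dist_eq (hr : 0 < r) {f : E → F}
    (hf : ∀ x y, dist (f x) (f y) = r * dist x y) (x y : E) :
    rieszKernel s (f x) (f y) = r ^ (-s) * rieszKernel s x y := by
  obtain rfl | hxy := eq_or_ne x y
  · simp [rieszKernel]
  · simp [rieszKernel, hxy, (injective_of_dist_eq_mul hr hf).ne hxy, hf, mul_rpow hr.le dist_nonneg]

lemma rieszEnergy_image_of_dist_eq [DecidableEq F] (hr : 0 < r) {f : E → F}
    (hf : ∀ x y, dist (f x) (f y) = r * dist x y) (ω : Finset E) :
    rieszEnergy s (ω.image f) = r ^ (-s) * rieszEnergy s ω := by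
  simp only [rieszEnergy_eq_sum_rieszKernel,
    sum_image fun x _ y _ h => injective_of_dist_eq_mul hr hf h, mul_sum,
    rieszKernel_map_of_dist_eq hr hf]

variable {ι : Type*} [Fintype ι] {A : Set E} {ψ : ι → E → E}

/-- Take the copies `ψ i '' ω`: the energy inside each copy scales by `r ^ (-s)`, and the
separation of the pieces `ψ i '' A` bounds every interaction between different copies. -/
lemma exists_rieszEnergy_copies_le (hr : 0 < r) (hσ : 0 < σ) (hs : 0 ≤ s)
    (hψ : ∀ i x y, dist (ψ i x) (ψ i y) = r * dist x y) (hsub : ∀ i, ψ i '' A ⊆ A)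
    (hsep : ∀ i j, i ≠ j → ∀ x ∈ ψ i '' A, ∀ y ∈ ψ j '' A, σ ≤ dist x y)
    {ω : Finset E} (hωA : ↑ω ⊆ A) :
    ∃ Ω : Finset E, ↑Ω ⊆ A ∧ Ω.card = Fintype.card ι * ω.card ∧
      rieszEnergy s Ω ≤ Fintype.card ι * r ^ (-s) * rieszEnergy s ω
        + σ ^ (-s) * (Fintype.card ι * ω.card : ℝ) ^ 2 := by
  classical
  have hmem : ∀ i, ∀ x ∈ ω.image (ψ i), x ∈ ψ i '' A := fun i x hx => by
    obtain ⟨y, hy, rfl⟩ := mem_image.1 hx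
    exact ⟨y, hωA hy, rfl⟩
  have hsep' : ∀ i j, i ≠ j → ∀ x ∈ ω.image (ψ i), ∀ y ∈ ω.image (ψ j), σ ≤ dist x y :=
    fun i j hij x hx y hy => hsep i j hij x (hmem i x hx) y (hmem j y hy)
  have hcard : #(univ.biUnion fun i => ω.image (ψ i)) = Fintype.card ι * #ω := by
    rw [card_biUnion fun i _ j _ hij => disjoint_of_le_dist hσ (hsep' i j hij)]
    simp [card_image_of_injective _ (injective_of_dist_eq_mul hr (hψ _))]
  refine ⟨univ.biUnion fun i => ω.image (ψ i), ?_, hcard, ?_⟩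
  · intro x hx
    obtain ⟨i, -, hxi⟩ := mem_biUnion.1 hx
    exact hsub i (hmem i x hxi)
  · refine (rieszEnergy_biUnion_le hσ hs _ hsep').trans_eq ?_
    simp only [rieszEnergy_image_of_dist_eq hr (hψ _), sum_const, card_univ, nsmul_eq_mul,
      hcard]
    push_cast
    ring

lemma minRieszEnergy_card_mul_le [Nonempty ι] (hr : 0 < r) (hσ : 0 < σ) (hs : 0 ≤ s)
    (hψ : ∀ i x y, dist (ψ i x) (ψ i y) = r * dist x y) (hsub : ∀ i, ψ i '' A ⊆ A)
    (hsep : ∀ i j, i ≠ j → ∀ x ∈ ψ i '' A, ∀ y ∈ ψ j '' A, σ ≤ dist x y) (N : ℕ) :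
    minRieszEnergy s A (Fintype.card ι * N) ≤
      Fintype.card ι * r ^ (-s) * minRieszEnergy s A N
        + σ ^ (-s) * (Fintype.card ι * N : ℝ) ^ 2 :=
  minRieszEnergy_le_mul_add (Nat.le_mul_of_pos_left N Fintype.card_pos) (by positivity)
    (by positivity) fun ω hωA hω => hω ▸ exists_rieszEnergy_copies_le hr hσ hs hψ hsub hsep hωA

end Configurations

/-- Adding the tail `C ρ ^ k / (1 - ρ)` of the geometric series makes `f` antitone. -/
lemma exists_tendsto_of_succ_le_add_geometric {f : ℕ → ℝ} {C ρ : ℝ} (hf : BddBelow (Set.range f))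
    (hC : 0 ≤ C) (hρ0 : 0 ≤ ρ) (hρ1 : ρ < 1) (h : ∀ k, f (k + 1) ≤ f k + C * ρ ^ k) :
    ∃ L, Tendsto f atTop (𝓝 L) := by
  set g : ℕ → ℝ := fun k => f k + C / (1 - ρ) * ρ ^ k
  have hg_anti : Antitone g := by
    refine antitone_nat_of_succ_le fun k => ?_
    have htail : C / (1 - ρ) * ρ ^ (k + 1) = C / (1 - ρ) * ρ ^ k - C * ρ ^ k := by
      field_simp [(sub_pos.2 hρ1).ne']
      ring
    simp only [g, htail]
    linarith [h k]
  have hg_bdd : BddBelow (Set.range g) := by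
    obtain ⟨b, hb⟩ := hf
    refine ⟨b, ?_⟩
    rintro _ ⟨k, rfl⟩
    have : 0 ≤ C / (1 - ρ) * ρ ^ k := by
      have := sub_pos.2 hρ1
      positivity
    linarith [hb ⟨k, rfl⟩]
  have htail : Tendsto (fun k => C / (1 - ρ) * ρ ^ k) atTop (𝓝 0) := by
    simpa using (tendsto_pow_atTop_nhds_zero_of_lt_one hρ0 hρ1).const_mul (C / (1 - ρ))
  refine ⟨⨅ k, g k, ?_⟩
  simpa [g] using (tendsto_atTop_ciInf hg_anti hg_bdd).sub htail

lemma rpow_neg_eq_of_eq_log_div {r M d : ℝ} (hr : 0 < r) (hM : 0 < M) (hlogr : log r ≠ 0)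
    (hd : d = log M / log (1 / r)) : r ^ (-d) = M := by
  rw [rpow_def_of_pos hr, hd, one_div, log_inv]
  field_simp
  exact exp_log hM

lemma div_rpow_le_of_le_rpow_mul_add {a b K m N t : ℝ} (hm : 0 < m) (hN : 0 < N)
    (h : a ≤ m ^ t * b + K * (m * N) ^ 2) :
    a / (m * N) ^ t ≤ b / N ^ t + K * (m * N) ^ (2 - t) := by
  calc a / (m * N) ^ t ≤ (m ^ t * b + K * (m * N) ^ 2) / (m * N) ^ t := by gcongr
    _ = b / N ^ t + K * (m * N) ^ (2 - t) := by
      rw [rpow_sub (by positivity), rpow_two, mul_rpow hm.le hN.le]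
      field_simp

theorem statement9_general {p : ℕ} (s d r σ : ℝ) (M : ℕ) (hM : 2 ≤ M) (hr : 0 < r) (hr1 : r < 1)
    (hσ : 0 < σ) (A : Set (EuclideanSpace ℝ (Fin p)))
    (ψ : Fin M → EuclideanSpace ℝ (Fin p) → EuclideanSpace ℝ (Fin p))
    (hψ : ∀ m x y, dist (ψ m x) (ψ m y) = r * dist x y)
    (hfix : A = ⋃ m, ψ m '' A)
    (hsep : ∀ i j, i ≠ j → ∀ x ∈ ψ i '' A, ∀ y ∈ ψ j '' A, σ ≤ dist x y)
    (hd : d = Real.log M / Real.log (1 / r)) (hsd : d < s)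
    (n : ℕ) (hn : 2 ≤ n) :
    ∃ L : ℝ, Tendsto
      (fun k : ℕ => minRieszEnergy s A (M ^ (k + 1) * n) /
        ((M ^ (k + 1) * n : ℕ) : ℝ) ^ (1 + s / d)) atTop (nhds L) := by
  have hM1 : (1 : ℝ) < M := by exact_mod_cast hM
  have hM0 : (0 : ℝ) < M := by linarith
  have hd0 : 0 < d := hd ▸ div_pos (log_pos hM1) (log_pos (one_lt_one_div hr hr1))
  set t := 1 + s / d
  have hMt : (M : ℝ) * r ^ (-s) = M ^ t := by
    rw [show -s = -d * (s / d) by field_simp, rpow_mul hr.le,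
      rpow_neg_eq_of_eq_log_div hr hM0 (log_neg hr hr1).ne hd, rpow_add hM0, rpow_one]
  have hstep : ∀ N : ℕ, minRieszEnergy s A (M * N) ≤
      M ^ t * minRieszEnergy s A N + σ ^ (-s) * (M * N : ℝ) ^ 2 := fun N => by
    have : Nonempty (Fin M) := ⟨⟨0, by omega⟩⟩
    simpa [hMt] using minRieszEnergy_card_mul_le hr hσ (hd0.trans hsd).le hψ
      (fun m => (Set.subset_iUnion (fun m => ψ m '' A) m).trans hfix.ge) hsep N
  have hρ : (M : ℝ) ^ (2 - t) < 1 :=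
    rpow_lt_one_of_one_lt_of_neg hM1 (by linarith [(one_lt_div hd0).2 hsd])
  refine exists_tendsto_of_succ_le_add_geometric ⟨0, ?_⟩ (by positivity) (by positivity) hρ
    (C := σ ^ (-s) * (M ^ 2 * n : ℝ) ^ (2 - t)) fun k => ?_
  · rintro _ ⟨k, rfl⟩
    exact div_nonneg (minRieszEnergy_nonneg _ _) (rpow_nonneg (Nat.cast_nonneg _) _)
  · have hN : (0 : ℝ) < (M ^ (k + 1) * n : ℕ) := by positivity
    have hMN : (M : ℝ) * (M ^ (k + 1) * n : ℕ) = M ^ 2 * n * M ^ k := by push_cast; ring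
    rw [show M ^ (k + 1 + 1) * n = M * (M ^ (k + 1) * n) by ring, Nat.cast_mul]
    refine (div_rpow_le_of_le_rpow_mul_add hM0 hN (hstep _)).trans_eq ?_
    rw [hMN, mul_rpow (by positivity) (by positivity), rpow_pow_comm hM0.le, mul_assoc]

/-- existence of the limit of normalized minimal energies along a
geometric subsequence M^k n. -/
theorem statement9 {p : ℕ} (s d r σ : ℝ) (M : ℕ) (hM : 2 ≤ M) (hr : 0 < r) (hr1 : r < 1)
    (hσ : 0 < σ) (A : Set (EuclideanSpace ℝ (Fin p))) (hA : IsCompact A)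
    (ψ : Fin M → EuclideanSpace ℝ (Fin p) → EuclideanSpace ℝ (Fin p))
    (hψ : ∀ m x y, dist (ψ m x) (ψ m y) = r * dist x y)
    (hfix : A = ⋃ m, ψ m '' A)
    (hsep : ∀ i j, i ≠ j → ∀ x ∈ ψ i '' A, ∀ y ∈ ψ j '' A, σ ≤ dist x y)
    (hosc : ∃ V : Set (EuclideanSpace ℝ (Fin p)), IsOpen V ∧ Bornology.IsBounded V ∧
      (⋃ m, ψ m '' V) ⊆ V ∧ Pairwise fun i j => Disjoint (ψ i '' V) (ψ j '' V))
    (hd : d = Real.log M / Real.log (1 / r)) (hsd : d < s)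
    (n : ℕ) (hn : 2 ≤ n) :
    ∃ L : ℝ, Tendsto
      (fun k : ℕ => minRieszEnergy s A (M ^ (k + 1) * n) /
        ((M ^ (k + 1) * n : ℕ) : ℝ) ^ (1 + s / d)) atTop (nhds L) :=
  statement9_general s d r σ M hM hr hr1 hσ A ψ hψ hfix hsep hd hsd n hn
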